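/- Every nontrivial continuum contained in the Knaster–Kuratowski fan is trivial; that is, every compact connected subset of the fan X having at least two points does not exist (every subcontinuum of X is a singleton or empty). -/

import Mathlib

open Set

/-- The apex of the Knaster–Kuratowski fan. -/
noncomputable def kkApex : ℝ × ℝ := (1/2, 1/2)

/-- The Cantor set, viewed inside `[0,1] × {0} ⊆ ℝ²` via first coordinates. -/
noncomputable def kkCantor : Set ℝ := cantorSet

/-- `C₁`: the endpoints of the open intervals removed in the construction of the
Cantor set, i.e. points `x` of the Cantor set which are an endpoint of a maximal
open interval disjoint from the Cantor set with both endpoints in the Cantor set. -/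
def kkEndpoints : Set ℝ :=
  {x | x ∈ cantorSet ∧ ∃ a ∈ cantorSet, ∃ b ∈ cantorSet,
    a < b ∧ Ioo a b ∩ cantorSet = ∅ ∧ (x = a ∨ x = b)}

/-- The Knaster–Kuratowski fan: over endpoints `x ∈ C₁` take the points of the
segment from `(x,0)` to the apex with rational second coordinate, over the other
Cantor points take the points with irrational second coordinate. -/
noncomputable def kkFan : Set (ℝ × ℝ) :=
  ⋃ x ∈ cantorSet, {p ∈ segment ℝ (x, (0:ℝ)) kkApex |
    (x ∈ kkEndpoints ∧ ∃ q : ℚ, p.2 = (q : ℝ)) ∨ (x ∉ kkEndpoints ∧ Irrational p.2)}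

/-! The fan minus its apex is totally disconnected: the projection from the apex onto the base
line is continuous there and lands in the Cantor set, so it is constant on a connected piece, and
over a single base point the heights are all rational or all irrational, hence also constant.

A compact connected set `S` in which `S \ {p}` is totally disconnected is a singleton: `S \ {p}`
is locally compact, so its clopen sets form a basis, and a compact clopen neighbourhood there of a
point `y ≠ p` is clopen in `S`. -/

section Dispersion

variable {X : Type*} [TopologicalSpace X] [T2Space X]

theorem PreconnectedSpace.subsingleton_of_isTotallyDisconnected_compl_singleton [CompactSpace X]
    [PreconnectedSpace X] (p : X) (h : IsTotallyDisconnected ({p}ᶜ : Set X)) :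
    Subsingleton X := by
  refine ⟨fun a b ↦ ?_⟩
  suffices ∀ y, y = p from (this a).trans (this b).symm
  intro y
  by_contra hy
  have hU : IsOpen ({p}ᶜ : Set X) := isOpen_compl_singleton
  have : LocallyCompactSpace ({p}ᶜ : Set X) := hU.locallyCompactSpace
  have : TotallyDisconnectedSpace ({p}ᶜ : Set X) := totallyDisconnectedSpace_subtype_iff.2 h
  obtain ⟨K, hK, hyK, -⟩ :=
    exists_compact_subset isOpen_univ (mem_univ (⟨y, hy⟩ : ({p}ᶜ : Set X)))
  obtain ⟨W, hW, hyW, hWK⟩ :=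
    loc_compact_Haus_tot_disc_of_zero_dim.mem_nhds_iff.mp (isOpen_interior.mem_nhds hyK)
  have hWc : IsCompact W := hK.of_isClosed_subset hW.isClosed (hWK.trans interior_subset)
  have hW' : IsClopen (((↑) : ({p}ᶜ : Set X) → X) '' W) :=
    ⟨(hWc.image continuous_subtype_val).isClosed, hU.isOpenMap_subtype_val W hW.isOpen⟩
  rcases isClopen_iff.mp hW' with hempty | huniv
  · exact (image_nonempty.mpr ⟨_, hyW⟩).ne_empty hempty
  · obtain ⟨z, -, hz⟩ := huniv.symm ▸ mem_univ p
    exact z.2 hz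

theorem IsCompact.subsingleton_of_isTotallyDisconnected_diff_singleton {S : Set X}
    (hc : IsCompact S) (hS : IsPreconnected S) (p : X) (h : IsTotallyDisconnected (S \ {p})) :
    S.Subsingleton := by
  by_cases hp : p ∈ S
  · have : CompactSpace S := isCompact_iff_compactSpace.mp hc
    have : PreconnectedSpace S := Subtype.preconnectedSpace hS
    have hS' : IsTotallyDisconnected ({⟨p, hp⟩}ᶜ : Set S) := by
      refine isTotallyDisconnected_of_image continuous_subtype_val.continuousOn
        Subtype.val_injective ?_
      convert h using 1
      ext x
      simp
    have := PreconnectedSpace.subsingleton_of_isTotallyDisconnected_compl_singleton _ hS'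
    exact subsingleton_coe S |>.mp this
  · exact h S (subset_sdiff_singleton subset_rfl hp) hS

end Dispersion

section Line

variable {α : Type*} [ConditionallyCompleteLinearOrder α] [TopologicalSpace α] [OrderTopology α]
  [DenselyOrdered α]

theorem isTotallyDisconnected_of_dense_compl {s : Set α} (h : Dense sᶜ) :
    IsTotallyDisconnected s :=
  isTotallyDisconnected_iff_lt.mpr fun _ _ _ _ hxy ↦
    h.exists_mem_open isOpen_Ioo (nonempty_Ioo.mpr hxy)

end Line

theorem isTotallyDisconnected_range_ratCast : IsTotallyDisconnected (range ((↑) : ℚ → ℝ)) :=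
  isTotallyDisconnected_of_dense_compl dense_irrational

theorem isTotallyDisconnected_setOf_irrational : IsTotallyDisconnected {x : ℝ | Irrational x} :=
  isTotallyDisconnected_of_dense_compl <| by
    simp only [Irrational, compl_ofPred, not_not, ofPred_mem_eq]
    exact Rat.denseRange_cast

theorem isTotallyDisconnected_cantorSet : IsTotallyDisconnected cantorSet :=
  totallyDisconnectedSpace_subtype_iff.mp cantorSetHomeomorphNatToBool.symm.totallyDisconnectedSpace

/-- The first coordinate of the point where the line through `kkApex` and `p` meets the
axis `s = 0`. -/
noncomputable def kkBase (p : ℝ × ℝ) : ℝ := (p.1 - p.2) / (1 - 2 * p.2)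

theorem fst_eq_kkBase_of_snd_lt (p : ℝ × ℝ) (h : p.2 < 1 / 2) :
    p.1 = (1 - 2 * p.2) * kkBase p + p.2 := by
  have : 1 - 2 * p.2 ≠ 0 := by linarith
  rw [kkBase]
  field_simp
  ring

theorem continuousOn_kkBase : ContinuousOn kkBase {p | p.2 < 1 / 2} :=
  ContinuousOn.div (by fun_prop) (by fun_prop) fun p (hp : p.2 < 1 / 2) ↦ by linarith

theorem snd_lt_and_kkBase_eq_of_mem_segment {x : ℝ} {p : ℝ × ℝ}
    (hp : p ∈ segment ℝ (x, 0) kkApex) (hne : p ≠ kkApex) : p.2 < 1 / 2 ∧ kkBase p = x := by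
  obtain ⟨u, v, hu, hv, huv, rfl⟩ := hp
  have hv1 : v ≠ 1 := by
    rintro rfl
    obtain rfl : u = 0 := by linarith
    simp at hne
  simp only [kkApex, kkBase, Prod.smul_mk, Prod.mk_add_mk, smul_eq_mul]
  refine ⟨by linarith [lt_of_le_of_ne (by linarith : v ≤ 1) hv1], ?_⟩
  obtain rfl : u = 1 - v := by linarith
  rw [div_eq_iff (by intro h; apply hv1; linarith)]
  ring

theorem mem_kkFan_diff_apex {p : ℝ × ℝ} (hp : p ∈ kkFan \ {kkApex}) :
    p.2 < 1 / 2 ∧ kkBase p ∈ cantorSet ∧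
      ((kkBase p ∈ kkEndpoints ∧ ∃ q : ℚ, p.2 = q) ∨
        (kkBase p ∉ kkEndpoints ∧ Irrational p.2)) := by
  obtain ⟨hp, hne⟩ := hp
  simp only [kkFan, mem_iUnion, mem_ofPred_eq] at hp
  obtain ⟨x, hx, hseg, hfiber⟩ := hp
  obtain ⟨hlt, rfl⟩ := snd_lt_and_kkBase_eq_of_mem_segment hseg hne
  exact ⟨hlt, hx, hfiber⟩

theorem isTotallyDisconnected_kkFan_diff_apex : IsTotallyDisconnected (kkFan \ {kkApex}) := by
  intro C hCsub hC p hp q hq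
  have hmem : ∀ r ∈ C, _ := fun r hr ↦ mem_kkFan_diff_apex (hCsub hr)
  have hbase : (kkBase '' C).Subsingleton :=
    isTotallyDisconnected_cantorSet _ (image_subset_iff.mpr fun r hr ↦ (hmem r hr).2.1)
      (hC.image _ (continuousOn_kkBase.mono fun r hr ↦ (hmem r hr).1))
  have hbase_eq : ∀ r ∈ C, kkBase r = kkBase p := fun r hr ↦
    hbase (mem_image_of_mem _ hr) (mem_image_of_mem _ hp)
  have hsnd : (Prod.snd '' C).Subsingleton := by
    have hC2 := hC.image _ continuous_snd.continuousOn
    by_cases hE : kkBase p ∈ kkEndpoints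
    · refine isTotallyDisconnected_range_ratCast _ ?_ hC2
      rintro _ ⟨r, hr, rfl⟩
      rcases (hmem r hr).2.2 with ⟨-, s, hs⟩ | ⟨hnE, -⟩
      · exact ⟨s, hs.symm⟩
      · exact absurd (hbase_eq r hr ▸ hE) hnE
    · refine isTotallyDisconnected_setOf_irrational _ ?_ hC2
      rintro _ ⟨r, hr, rfl⟩
      rcases (hmem r hr).2.2 with ⟨hE', -⟩ | ⟨-, hirr⟩
      · exact absurd (hbase_eq r hr ▸ hE') hE
      · exact hirr
  have h2 : p.2 = q.2 := hsnd (mem_image_of_mem _ hp) (mem_image_of_mem _ hq)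
  refine Prod.ext ?_ h2
  rw [fst_eq_kkBase_of_snd_lt p (hmem p hp).1, fst_eq_kkBase_of_snd_lt q (hmem q hq).1,
    hbase_eq q hq, h2]

/-- Every compact connected subset of the Knaster–Kuratowski fan is empty or a
singleton; i.e. the fan contains no nontrivial continuum. -/
theorem stmt_8 (S : Set (ℝ × ℝ)) (hS : S ⊆ kkFan) (hc : IsCompact S)
    (hconn : IsPreconnected S) : S.Subsingleton :=
  hc.subsingleton_of_isTotallyDisconnected_diff_singleton hconn kkApex fun _ ht ↦
    isTotallyDisconnected_kkFan_diff_apex _ (ht.trans (sdiff_subset_sdiff_left hS))
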